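/- Assume additionally that tr B ≥ 0 and that L₀ := max{Re(λ) : λ a (complex) eigenvalue of B} > 0. Then there exists a constant c₀ > 0 such that V(t) ≥ c₀·e^{L₀ t} for all t ≥ 1. -/

import Mathlib

open MeasureTheory Matrix Real
open scoped ENNReal Topology

noncomputable section

/-- The covariance matrix `K(t) = (1/t) ∫₀ᵗ e^{sB} Q e^{sBᵀ} ds`. -/
def hK {N : ℕ} (Q B : Matrix (Fin N) (Fin N) ℝ) (t : ℝ) : Matrix (Fin N) (Fin N) ℝ :=
  Matrix.of fun i j =>
    (1 / t) * ∫ s in (0:ℝ)..t, (NormedSpace.exp (s • B) * Q * NormedSpace.exp (s • Bᵀ)) i j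

/-- The intertwined pseudo-distance `m_t(X,Y) = ⟨K(t)⁻¹(Y - e^{tB}X), Y - e^{tB}X⟩^{1/2}`. -/
def hm {N : ℕ} (Q B : Matrix (Fin N) (Fin N) ℝ) (t : ℝ) (X Y : Fin N → ℝ) : ℝ :=
  Real.sqrt (dotProduct ((hK Q B t)⁻¹.mulVec (Y - (NormedSpace.exp (t • B)).mulVec X))
    (Y - (NormedSpace.exp (t • B)).mulVec X))

/-- The volume of the unit ball in `ℝᴺ`. -/
def omegaN (N : ℕ) : ℝ := (volume (Metric.ball (0 : EuclideanSpace ℝ (Fin N)) 1)).toReal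

/-- The volume function `V(t) = ω_N (det (t K(t)))^{1/2}`. -/
def hV {N : ℕ} (Q B : Matrix (Fin N) (Fin N) ℝ) (t : ℝ) : ℝ :=
  omegaN N * Real.sqrt ((t • hK Q B t).det)

/-- Hörmander's kernel `p(X,Y,t) = (4π)^{-N/2} ω_N V(t)⁻¹ exp(-m_t(X,Y)²/(4t))`. -/
def hkernel {N : ℕ} (Q B : Matrix (Fin N) (Fin N) ℝ) (X Y : Fin N → ℝ) (t : ℝ) : ℝ :=
  ((4 * π) ^ (-(N : ℝ) / 2) * omegaN N / hV Q B t) * Real.exp (-(hm Q B t X Y) ^ 2 / (4 * t))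

/-- The Hörmander semigroup `P_t f(X) = ∫ p(X,Y,t) f(Y) dY`. -/
def hP {N : ℕ} (Q B : Matrix (Fin N) (Fin N) ℝ) (t : ℝ) (f : (Fin N → ℝ) → ℝ)
    (X : Fin N → ℝ) : ℝ :=
  ∫ Y, hkernel Q B X Y t * f Y

/-- The Riesz potential `ℐ_α f(X) = Γ(α/2)⁻¹ ∫₀^∞ t^{α/2-1} P_t f(X) dt`. -/
def riesz {N : ℕ} (Q B : Matrix (Fin N) (Fin N) ℝ) (α : ℝ) (f : (Fin N → ℝ) → ℝ)
    (X : Fin N → ℝ) : ℝ :=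
  (1 / Real.Gamma (α / 2)) * ∫ t in Set.Ioi (0:ℝ), t ^ (α / 2 - 1) * hP Q B t f X

/-- The Poisson semigroup `𝒫_z f(X) = (4π)^{-1/2} ∫₀^∞ z t^{-3/2} e^{-z²/(4t)} P_t f(X) dt`. -/
def poisson {N : ℕ} (Q B : Matrix (Fin N) (Fin N) ℝ) (z : ℝ) (f : (Fin N → ℝ) → ℝ)
    (X : Fin N → ℝ) : ℝ :=
  (4 * π) ^ (-(1:ℝ) / 2) *
    ∫ t in Set.Ioi (0:ℝ), z * t ^ (-(3:ℝ) / 2) * Real.exp (-(z ^ 2) / (4 * t)) * hP Q B t f X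

/-- The Poisson radial maximal function `ℳ* f(X) = sup_{z>0} |𝒫_z f(X)|`. -/
def maxP {N : ℕ} (Q B : Matrix (Fin N) (Fin N) ℝ) (f : (Fin N → ℝ) → ℝ)
    (X : Fin N → ℝ) : ℝ :=
  ⨆ z : {z : ℝ // 0 < z}, |poisson Q B z.1 f X|

/-- The fractional power `(-𝒜)^s f(X) = -(s/Γ(1-s)) ∫₀^∞ t^{-(1+s)} (P_t f(X) - f(X)) dt`. -/
def fracA {N : ℕ} (Q B : Matrix (Fin N) (Fin N) ℝ) (s : ℝ) (f : (Fin N → ℝ) → ℝ)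
    (X : Fin N → ℝ) : ℝ :=
  -(s / Real.Gamma (1 - s)) * ∫ t in Set.Ioi (0:ℝ), t ^ (-(1 + s)) * (hP Q B t f X - f X)

/-- The degenerate Ornstein-Uhlenbeck operator `𝒜 f = tr(Q ∇²f) + ⟨BX, ∇f⟩`. -/
def opA {N : ℕ} (Q B : Matrix (Fin N) (Fin N) ℝ) (f : (Fin N → ℝ) → ℝ)
    (X : Fin N → ℝ) : ℝ :=
  (∑ i, ∑ j, Q i j * fderiv ℝ (fun Y => fderiv ℝ f Y (Pi.single j 1)) X (Pi.single i 1)) +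
    ∑ i, B.mulVec X i * fderiv ℝ f X (Pi.single i 1)

/-!
Let `G(t) = t K(t) = ∫₀ᵗ e^{sB} Q e^{sBᵀ} ds`. The integrand is positive semidefinite, so `G` is
monotone in the Loewner order and every eigenvalue of `G(t)`, `t ≥ 1`, is at least the least
eigenvalue `m > 0` of `G(1)`. If `v` is a complex left eigenvector of `B` for `μ`, then
`e^{sBᵀ} v = e^{sμ} v`, hence `Re (v* G(t) v) = (∫₀ᵗ e^{2 s Re μ} ds) · Re (v* Q v)`; positivity of
`G(1)` makes `Re (v* Q v) > 0`. So `tr G(t) ≥ c e^{2 L₀ t}`, the largest eigenvalue is at least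
`tr G(t) / N`, and `det G(t) ≥ m^{N-1} tr G(t) / N` gives `V(t) = ω_N √(det G(t)) ≥ c₀ e^{L₀ t}`.
-/

open scoped MatrixOrder

namespace Matrix

variable {n : Type*} [Fintype n]

theorem exists_vecMul_eq_smul_of_mem_spectrum [DecidableEq n] {K : Type*} [Field K]
    {A : Matrix n n K} {μ : K} (h : μ ∈ spectrum K A) : ∃ v ≠ 0, v ᵥ* A = μ • v := by
  rw [spectrum.mem_iff, isUnit_iff_isUnit_det, isUnit_iff_ne_zero, not_not,
    ← exists_vecMul_eq_zero_iff] at h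
  obtain ⟨v, hv, hvA⟩ := h
  refine ⟨v, hv, ?_⟩
  rwa [vecMul_sub, sub_eq_zero, Algebra.algebraMap_eq_smul_one, vecMul_smul, vecMul_one,
    eq_comm] at hvA

open scoped Norms.Operator in
theorem exp_mulVec_of_mulVec_eq_smul [DecidableEq n] {A : Matrix n n ℂ} {v : n → ℂ} {μ : ℂ}
    (h : A *ᵥ v = μ • v) : NormedSpace.exp A *ᵥ v = Complex.exp μ • v := by
  -- every column of `P` is `v`, so `A * P = P * μ` and this relation passes to the exponentials
  set P : Matrix n n ℂ := of fun i _ => v i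
  have hcol : ∀ (M : Matrix n n ℂ) i j, (M * P) i j = (M *ᵥ v) i := fun M i j => rfl
  have hP : SemiconjBy P (algebraMap ℂ _ μ) A := by
    rw [SemiconjBy, ← Algebra.commutes, ← Algebra.smul_def]
    ext i j
    rw [hcol, h]
    rfl
  have hexp := hP.exp_right
  rw [← NormedSpace.algebraMap_exp_comm, SemiconjBy, ← Algebra.commutes,
    ← Algebra.smul_def] at hexp
  ext i
  exact (congr_fun₂ hexp i i).symm.trans (by rw [Complex.exp_eq_exp_ℂ]; rfl)

open scoped Norms.Operator in
theorem map_ofReal_exp [DecidableEq n] (A : Matrix n n ℝ) :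
    (NormedSpace.exp A).map Complex.ofReal = NormedSpace.exp (A.map Complex.ofReal) :=
  NormedSpace.map_exp Complex.ofRealHom.mapMatrix
    (continuous_id.matrix_map Complex.continuous_ofReal) A

open scoped Norms.Operator in
theorem continuous_exp_smul [DecidableEq n] (A : Matrix n n ℝ) :
    Continuous fun s : ℝ => NormedSpace.exp (s • A) :=
  NormedSpace.exp_continuous.comp (continuous_id.smul continuous_const)

theorem PosSemidef.dotProduct_mulVec_le_trace_mul [DecidableEq n] {A : Matrix n n ℝ}
    (hA : A.PosSemidef) (x : n → ℝ) : x ⬝ᵥ A *ᵥ x ≤ A.trace * (x ⬝ᵥ x) := by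
  obtain ⟨R, rfl⟩ := CStarAlgebra.nonneg_iff_eq_star_mul_self.mp hA.nonneg
  have hform : x ⬝ᵥ (star R * R) *ᵥ x = ∑ i, (∑ j, R i j * x j) ^ 2 := by
    rw [← mulVec_mulVec, dotProduct_mulVec, star_eq_conjTranspose,
      conjTranspose_eq_transpose_of_trivial, vecMul_transpose]
    simp [dotProduct, mulVec, sq]
  have htrace : (star R * R).trace = ∑ i, ∑ j, R i j ^ 2 := by
    simp only [trace, diag, mul_apply, star_apply, star_trivial, sq]
    exact Finset.sum_comm
  rw [hform, htrace, Finset.sum_mul]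
  exact Finset.sum_le_sum fun i _ => by
    simpa [dotProduct, sq] using Finset.sum_mul_sq_le_sq_mul_sq Finset.univ (R i) x

theorem pow_mul_trace_div_le_det [DecidableEq n] [Nonempty n] {A : Matrix n n ℝ} {m : ℝ}
    (hm : 0 ≤ m) (h : algebraMap ℝ _ m ≤ A) :
    m ^ (Fintype.card n - 1) * (A.trace / Fintype.card n) ≤ A.det := by
  have hA : A.IsHermitian := IsSelfAdjoint.of_ge h (IsSelfAdjoint.algebraMap _ (.all m))
  have hlow (i : n) : m ≤ hA.eigenvalues i :=
    (algebraMap_le_iff_le_spectrum (a := A) hA.isSelfAdjoint).1 h _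
      (hA.eigenvalues_mem_spectrum_real i)
  obtain ⟨i₀, -, hi₀⟩ : ∃ i ∈ Finset.univ, A.trace / Fintype.card n ≤ hA.eigenvalues i := by
    refine Finset.exists_le_of_sum_le Finset.univ_nonempty ?_
    rw [Finset.sum_const, Finset.card_univ, nsmul_eq_mul, mul_div_cancel₀ _ (by positivity),
      hA.trace_eq_sum_eigenvalues]
    simp
  have hprod : m ^ (Fintype.card n - 1) ≤ ∏ i ∈ Finset.univ.erase i₀, hA.eigenvalues i := by
    simpa [Finset.card_erase_of_mem] using
      Finset.prod_le_prod (fun i _ => hm) (fun i (_ : i ∈ Finset.univ.erase i₀) => hlow i)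
  rw [hA.det_eq_prod_eigenvalues, ← Finset.mul_prod_erase Finset.univ _ (Finset.mem_univ i₀)]
  simp only [RCLike.ofReal_real_eq_id, id]
  rw [mul_comm (hA.eigenvalues i₀)]
  exact mul_le_mul_of_nonneg hprod hi₀ (pow_nonneg hm _) (hm.trans (hlow i₀))

theorem dotProduct_mulVec_intervalIntegral {f : ℝ → Matrix n n ℝ} (hf : Continuous f)
    (a b : ℝ) (x : n → ℝ) :
    x ⬝ᵥ (of fun i j => ∫ s in a..b, f s i j) *ᵥ x = ∫ s in a..b, x ⬝ᵥ f s *ᵥ x := by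
  have hij (i j : n) : IntervalIntegrable (fun s => x i * (f s i j * x j)) volume a b :=
    (continuous_const.mul ((hf.matrix_elem i j).mul continuous_const)).intervalIntegrable _ _
  simp only [dotProduct, mulVec, of_apply, Finset.mul_sum]
  rw [intervalIntegral.integral_finsetSum (f := fun i s => ∑ j, x i * (f s i j * x j))
    fun i _ => by simpa only [Finset.sum_fn] using IntervalIntegrable.sum _ fun j _ => hij i j]
  refine Finset.sum_congr rfl fun i _ => ?_
  rw [intervalIntegral.integral_finsetSum fun j _ => hij i j]
  simp only [intervalIntegral.integral_const_mul, intervalIntegral.integral_mul_const]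

theorem posSemidef_intervalIntegral {f : ℝ → Matrix n n ℝ} (hf : Continuous f) {a b : ℝ}
    (hab : a ≤ b) (hpos : ∀ s ∈ Set.Icc a b, (f s).PosSemidef) :
    (of fun i j => ∫ s in a..b, f s i j).PosSemidef := by
  refine .of_dotProduct_mulVec_nonneg ?_ fun x => ?_
  · ext i j
    refine intervalIntegral.integral_congr fun s hs => ?_
    rw [Set.uIcc_of_le hab] at hs
    exact (hpos s hs).isHermitian.apply i j
  · rw [star_trivial, dotProduct_mulVec_intervalIntegral hf]
    refine intervalIntegral.integral_nonneg hab fun s hs => ?_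
    simpa using (hpos s hs).dotProduct_mulVec_nonneg x

/-- `Re (v* A v)`, written through the real and imaginary parts of `v`. -/
def complexQuadForm (A : Matrix n n ℝ) (v : n → ℂ) : ℝ :=
  (fun i => (v i).re) ⬝ᵥ A *ᵥ (fun i => (v i).re) + (fun i => (v i).im) ⬝ᵥ A *ᵥ fun i => (v i).im

theorem complexQuadForm_smul (A : Matrix n n ℝ) (c : ℂ) (v : n → ℂ) :
    complexQuadForm A (c • v) = Complex.normSq c * complexQuadForm A v := by
  have hre :
      (fun i => ((c • v) i).re) = c.re • (fun i => (v i).re) - c.im • fun i => (v i).im := by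
    ext i; simp [Complex.mul_re]
  have him :
      (fun i => ((c • v) i).im) = c.im • (fun i => (v i).re) + c.re • fun i => (v i).im := by
    ext i; simp [Complex.mul_im]; ring
  simp only [complexQuadForm, hre, him, mulVec_add, mulVec_sub, mulVec_smul, dotProduct_add,
    dotProduct_sub, add_dotProduct, sub_dotProduct, dotProduct_smul, smul_dotProduct, smul_eq_mul,
    Complex.normSq_apply]
  ring

theorem re_map_ofReal_mulVec (E : Matrix n n ℝ) (v : n → ℂ) :
    (fun i => (E.map Complex.ofReal *ᵥ v) i |>.re) = E *ᵥ fun i => (v i).re := by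
  ext i; simp [mulVec, dotProduct, Complex.re_sum]

theorem im_map_ofReal_mulVec (E : Matrix n n ℝ) (v : n → ℂ) :
    (fun i => (E.map Complex.ofReal *ᵥ v) i |>.im) = E *ᵥ fun i => (v i).im := by
  ext i; simp [mulVec, dotProduct, Complex.im_sum]

theorem complexQuadForm_transpose_mul_mul (E A : Matrix n n ℝ) (v : n → ℂ) :
    complexQuadForm (Eᵀ * A * E) v = complexQuadForm A (E.map Complex.ofReal *ᵥ v) := by
  simp only [complexQuadForm, re_map_ofReal_mulVec, im_map_ofReal_mulVec, ← mulVec_mulVec,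
    dotProduct_mulVec _ Eᵀ, vecMul_transpose]

theorem PosSemidef.complexQuadForm_le_trace_mul [DecidableEq n] {A : Matrix n n ℝ}
    (hA : A.PosSemidef) (v : n → ℂ) : complexQuadForm A v ≤ A.trace * complexQuadForm 1 v := by
  simp only [complexQuadForm, one_mulVec, mul_add]
  exact add_le_add (hA.dotProduct_mulVec_le_trace_mul _) (hA.dotProduct_mulVec_le_trace_mul _)

theorem PosDef.complexQuadForm_pos {A : Matrix n n ℝ} (hA : A.PosDef) {v : n → ℂ}
    (hv : v ≠ 0) : 0 < complexQuadForm A v := by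
  have hnonneg (x : n → ℝ) : 0 ≤ x ⬝ᵥ A *ᵥ x := by
    simpa using hA.posSemidef.dotProduct_mulVec_nonneg x
  have hpos {x : n → ℝ} (hx : x ≠ 0) : 0 < x ⬝ᵥ A *ᵥ x := by
    simpa using hA.dotProduct_mulVec_pos hx
  by_cases h : (fun i => (v i).re) = 0
  · have him : (fun i => (v i).im) ≠ 0 := fun h' =>
      hv (funext fun i => Complex.ext (congr_fun h i) (congr_fun h' i))
    exact add_pos_of_nonneg_of_pos (hnonneg _) (hpos him)
  · exact add_pos_of_pos_of_nonneg (hpos h) (hnonneg _)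

theorem complexQuadForm_intervalIntegral {f : ℝ → Matrix n n ℝ} (hf : Continuous f)
    (a b : ℝ) (v : n → ℂ) :
    complexQuadForm (of fun i j => ∫ s in a..b, f s i j) v
      = ∫ s in a..b, complexQuadForm (f s) v := by
  have hform (x : n → ℝ) : Continuous fun s => x ⬝ᵥ f s *ᵥ x :=
    continuous_const.dotProduct (hf.matrix_mulVec continuous_const)
  rw [complexQuadForm, dotProduct_mulVec_intervalIntegral hf,
    dotProduct_mulVec_intervalIntegral hf,
    ← intervalIntegral.integral_add ((hform _).intervalIntegrable _ _)
      ((hform _).intervalIntegrable _ _)]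
  rfl

end Matrix

theorem integral_exp_mul {c : ℝ} (hc : c ≠ 0) (a b : ℝ) :
    ∫ x in a..b, Real.exp (c * x) = (Real.exp (c * b) - Real.exp (c * a)) / c := by
  rw [eq_div_iff hc, mul_comm, intervalIntegral.mul_integral_comp_mul_left, integral_exp]

section Gramian

variable {n : Type*} [Fintype n] [DecidableEq n]

def gramian (Q B : Matrix n n ℝ) (t : ℝ) : Matrix n n ℝ :=
  of fun i j => ∫ s in (0:ℝ)..t, (NormedSpace.exp (s • B) * Q * NormedSpace.exp (s • Bᵀ)) i j

theorem smul_hK_eq_gramian {N : ℕ} (Q B : Matrix (Fin N) (Fin N) ℝ) {t : ℝ} (ht : t ≠ 0) :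
    t • hK Q B t = gramian Q B t := by
  ext i j
  simp [hK, gramian, ht]

theorem continuous_exp_smul_mul_mul_exp_smul (Q B : Matrix n n ℝ) :
    Continuous fun s : ℝ => NormedSpace.exp (s • B) * Q * NormedSpace.exp (s • Bᵀ) :=
  ((continuous_exp_smul B).matrix_mul continuous_const).matrix_mul (continuous_exp_smul Bᵀ)

theorem exp_smul_mul_mul_exp_smul_transpose (Q B : Matrix n n ℝ) (s : ℝ) :
    NormedSpace.exp (s • B) * Q * NormedSpace.exp (s • Bᵀ)
      = (NormedSpace.exp (s • Bᵀ))ᵀ * Q * NormedSpace.exp (s • Bᵀ) := by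
  rw [← exp_transpose, transpose_smul, transpose_transpose]

theorem gramian_zero (Q B : Matrix n n ℝ) : gramian Q B 0 = 0 := by
  ext i j
  simp [gramian]

theorem gramian_mono {Q : Matrix n n ℝ} (hQ : Q.PosSemidef) (B : Matrix n n ℝ) :
    Monotone (gramian Q B) := by
  intro s t hst
  have hcont := continuous_exp_smul_mul_mul_exp_smul Q B
  have hsub : gramian Q B t - gramian Q B s = of fun i j => ∫ r in s..t,
      (NormedSpace.exp (r • B) * Q * NormedSpace.exp (r • Bᵀ)) i j := by
    ext i j
    have hij := (hcont.matrix_elem i j).intervalIntegrable (μ := volume)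
    exact intervalIntegral.integral_interval_sub_left (hij _ _) (hij _ _)
  rw [le_iff, hsub]
  refine posSemidef_intervalIntegral hcont hst fun r _ => ?_
  rw [exp_smul_mul_mul_exp_smul_transpose, ← conjTranspose_eq_transpose_of_trivial]
  exact hQ.conjTranspose_mul_mul_same _

theorem posSemidef_gramian {Q : Matrix n n ℝ} (hQ : Q.PosSemidef) (B : Matrix n n ℝ) {t : ℝ}
    (ht : 0 ≤ t) : (gramian Q B t).PosSemidef := by
  rw [← nonneg_iff_posSemidef, ← gramian_zero Q B]
  exact gramian_mono hQ B ht

theorem complexQuadForm_gramian (Q B : Matrix n n ℝ) {v : n → ℂ} {μ : ℂ}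
    (hv : v ᵥ* B.map Complex.ofReal = μ • v) (t : ℝ) :
    complexQuadForm (gramian Q B t) v
      = (∫ s in (0:ℝ)..t, Real.exp (2 * μ.re * s)) * complexQuadForm Q v := by
  rw [gramian, complexQuadForm_intervalIntegral (continuous_exp_smul_mul_mul_exp_smul Q B),
    ← intervalIntegral.integral_mul_const]
  refine intervalIntegral.integral_congr fun s _ => ?_
  have heig : ((s • Bᵀ).map Complex.ofReal) *ᵥ v = ((s : ℂ) * μ) • v := by
    have hmap : (s • Bᵀ).map Complex.ofReal = (s : ℂ) • (B.map Complex.ofReal)ᵀ := by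
      ext i j
      simp
    rw [hmap, smul_mulVec, mulVec_transpose, hv, smul_smul]
  rw [exp_smul_mul_mul_exp_smul_transpose, complexQuadForm_transpose_mul_mul, map_ofReal_exp,
    exp_mulVec_of_mulVec_eq_smul heig, complexQuadForm_smul, Complex.normSq_eq_norm_sq,
    Complex.norm_exp, ← Real.exp_nat_mul, Complex.re_ofReal_mul]
  ring_nf

theorem exists_pos_mul_exp_le_trace_gramian {Q B : Matrix n n ℝ} (hQ : Q.PosSemidef)
    (hpos : (gramian Q B 1).PosDef) {v : n → ℂ} {μ : ℂ} (hv0 : v ≠ 0)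
    (hv : v ᵥ* B.map Complex.ofReal = μ • v) (hμre : 0 < μ.re) :
    ∃ c > 0, ∀ t ≥ (1 : ℝ), c * Real.exp (2 * μ.re * t) ≤ (gramian Q B t).trace := by
  set L := 2 * μ.re
  have hL : 0 < L := by positivity
  set q := complexQuadForm Q v
  set r := complexQuadForm 1 v
  have hr : 0 < r := PosDef.one.complexQuadForm_pos hv0
  have hform (t : ℝ) : complexQuadForm (gramian Q B t) v = (Real.exp (L * t) - 1) / L * q := by
    rw [complexQuadForm_gramian Q B hv, integral_exp_mul hL.ne', mul_zero, Real.exp_zero]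
  have hq : 0 < q := by
    have h1 := hpos.complexQuadForm_pos hv0
    rw [hform, mul_one] at h1
    exact pos_of_mul_pos_right h1 (div_pos (by simp [hL]) hL).le
  have hE : 0 < 1 - Real.exp (-L) := sub_pos.2 (Real.exp_lt_one_iff.2 (neg_neg_of_pos hL))
  refine ⟨(1 - Real.exp (-L)) / L * q / r, by positivity, fun t ht => ?_⟩
  have hgrowth : (1 - Real.exp (-L)) * Real.exp (L * t) ≤ Real.exp (L * t) - 1 := by
    have : 1 ≤ Real.exp (-L + L * t) := Real.one_le_exp (by nlinarith)
    rw [sub_mul, one_mul, ← Real.exp_add]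
    linarith
  rw [div_mul_eq_mul_div, div_le_iff₀ hr]
  calc (1 - Real.exp (-L)) / L * q * Real.exp (L * t)
      = (1 - Real.exp (-L)) * Real.exp (L * t) / L * q := by ring
    _ ≤ (Real.exp (L * t) - 1) / L * q := by gcongr
    _ = complexQuadForm (gramian Q B t) v := (hform t).symm
    _ ≤ (gramian Q B t).trace * r :=
      (posSemidef_gramian hQ B (by linarith)).complexQuadForm_le_trace_mul v

theorem exists_pos_mul_exp_le_det_gramian {Q B : Matrix n n ℝ} (hQ : Q.PosSemidef)
    (hpos : (gramian Q B 1).PosDef) {μ : ℂ} (hμ : μ ∈ spectrum ℂ (B.map Complex.ofReal))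
    (hμre : 0 < μ.re) :
    ∃ c > 0, ∀ t ≥ (1 : ℝ), c * Real.exp (2 * μ.re * t) ≤ (gramian Q B t).det := by
  obtain ⟨v, hv0, hv⟩ := exists_vecMul_eq_smul_of_mem_spectrum hμ
  have : Nonempty n := let ⟨i, _⟩ := Function.ne_iff.mp hv0; ⟨i⟩
  obtain ⟨m, hm, hm1⟩ := (CFC.exists_pos_algebraMap_le_iff hpos.isHermitian.isSelfAdjoint).2
    fun x hx => hpos.isStrictlyPositive.spectrum_pos hx
  obtain ⟨c, hc, htrace⟩ := exists_pos_mul_exp_le_trace_gramian hQ hpos hv0 hv hμre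
  refine ⟨m ^ (Fintype.card n - 1) * c / Fintype.card n, by positivity, fun t ht => ?_⟩
  calc _ = m ^ (Fintype.card n - 1) * (c * Real.exp (2 * μ.re * t) / Fintype.card n) := by ring
    _ ≤ m ^ (Fintype.card n - 1) * ((gramian Q B t).trace / Fintype.card n) := by
      gcongr
      exact htrace t ht
    _ ≤ (gramian Q B t).det := pow_mul_trace_div_le_det hm.le (hm1.trans (gramian_mono hQ B ht))

end Gramian

theorem omegaN_pos (N : ℕ) : 0 < omegaN N :=
  ENNReal.toReal_pos (Metric.measure_ball_pos _ _ one_pos).ne' measure_ball_lt_top.ne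

theorem volume_exponential_growth_general
    (N : ℕ) (Q B : Matrix (Fin N) (Fin N) ℝ)
    (hQ : Q.PosSemidef)
    (hHor : ∀ t > 0, (hK Q B t).PosDef)
    (L0 : ℝ) (hL0 : 0 < L0)
    (hmem : ∃ μ ∈ spectrum ℂ (B.map Complex.ofReal), μ.re = L0) :
    ∃ c₀ > (0:ℝ), ∀ t ≥ (1:ℝ), c₀ * Real.exp (L0 * t) ≤ hV Q B t := by
  obtain ⟨μ, hμ, rfl⟩ := hmem
  have h1 : (gramian Q B 1).PosDef := by
    simpa [← smul_hK_eq_gramian Q B one_ne_zero] using hHor 1 one_pos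
  obtain ⟨c, hc, hdet⟩ := exists_pos_mul_exp_le_det_gramian hQ h1 hμ hL0
  refine ⟨omegaN N * √c, mul_pos (omegaN_pos N) (Real.sqrt_pos.2 hc), fun t ht => ?_⟩
  have hsq : Real.exp (2 * μ.re * t) = Real.exp (μ.re * t) ^ 2 := by
    rw [← Real.exp_nat_mul]
    ring_nf
  rw [hV, smul_hK_eq_gramian Q B (by positivity), mul_assoc, ← Real.sqrt_sq (Real.exp_pos _).le,
    ← Real.sqrt_mul hc.le, ← hsq]
  exact mul_le_mul_of_nonneg_left (Real.sqrt_le_sqrt (hdet t ht)) (omegaN_pos N).le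

/-- if some eigenvalue of `B` has strictly positive real part, `V(t)` blows up
exponentially. -/
theorem volume_exponential_growth
    (N : ℕ) (hN : 2 ≤ N) (Q B : Matrix (Fin N) (Fin N) ℝ)
    (hQ : Q.PosSemidef)
    (hHor : ∀ t > 0, (hK Q B t).PosDef)
    (htr : 0 ≤ B.trace)
    (L0 : ℝ) (hL0 : 0 < L0)
    (hmem : ∃ μ ∈ spectrum ℂ (B.map Complex.ofReal), μ.re = L0)
    (hmax : ∀ μ ∈ spectrum ℂ (B.map Complex.ofReal), μ.re ≤ L0) :
    ∃ c₀ > (0:ℝ), ∀ t ≥ (1:ℝ), c₀ * Real.exp (L0 * t) ≤ hV Q B t :=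
  volume_exponential_growth_general N Q B hQ hHor L0 hL0 hmem
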